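/- Let G and F be finite simple graphs, φ a voltage assignment on G whose values lie in a subgroup Γ of Aut(F). Let ρ₁, …, ρ_ℓ be group homomorphisms from Γ to the invertible complex f_i×f_i matrices, let m₁, …, m_ℓ be nonnegative integers with Σᵢ mᵢfᵢ = |V(F)|, and suppose M is an invertible complex V(F)×V(F) matrix such that for every γ ∈ Γ, M⁻¹P(γ)M equals the block diagonal matrix ⊕_{i=1}^{ℓ} (I_{mᵢ} ⊗ ρᵢ(γ)), and moreover M⁻¹A(F)M = A(F) and M⁻¹D(F)M = D(F). Then for every complex number μ, (M ⊗ I_{V(G)})⁻¹ (A(G×^φF) − μ·D(G×^φF)) (M ⊗ I_{V(G)}) = ⊕_{i=1}^{ℓ} I_{mᵢ} ⊗ ( Σ_{γ∈Γ} ρᵢ(γ) ⊗ A(G_{φ,γ}) − μ·I_{fᵢ} ⊗ D(G) ) + (A(F) − μ·D(F)) ⊗ I_{V(G)}, where vertices of G×^φF are indexed by pairs (v,u) with v ∈ V(F), u ∈ V(G). -/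

import Mathlib

open Matrix BigOperators Kronecker
open scoped Classical

noncomputable section

variable {α β : Type*}

def adjM [Fintype α] (G : SimpleGraph α) : Matrix α α ℂ :=
  Matrix.of fun u v => if G.Adj u v then (1 : ℂ) else 0

def degM [Fintype α] (G : SimpleGraph α) : Matrix α α ℂ :=
  Matrix.diagonal fun v => ((G.neighborSet v).ncard : ℂ)

def Fpoly [Fintype α] (G : SimpleGraph α) (lam mu : ℂ) : ℂ :=
  (lam • (1 : Matrix α α ℂ) - (adjM G - mu • degM G)).det

def permM (γ : Equiv.Perm β) : Matrix β β ℂ :=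
  Matrix.of fun v w => if γ v = w then (1 : ℂ) else 0

def voltM [Fintype α] (G : SimpleGraph α) (φ : α → α → Equiv.Perm β) (γ : Equiv.Perm β) :
    Matrix α α ℂ :=
  Matrix.of fun u₁ u₂ => if G.Adj u₁ u₂ ∧ φ u₁ u₂ = γ then (1 : ℂ) else 0

def autPerm (F : SimpleGraph β) : Subgroup (Equiv.Perm β) where
  carrier := {γ | ∀ a b, F.Adj (γ a) (γ b) ↔ F.Adj a b}
  one_mem' := by intro a b; simp
  mul_mem' := by intro γ δ hγ hδ a b; simp [Equiv.Perm.mul_apply, hγ _ _, hδ _ _]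
  inv_mem' := by intro γ hγ a b; simpa using (hγ (γ⁻¹ a) (γ⁻¹ b)).symm

def bundle (G : SimpleGraph α) (F : SimpleGraph β) (φ : α → α → Equiv.Perm β)
    (hsym : ∀ u₁ u₂, G.Adj u₁ u₂ → φ u₂ u₁ = (φ u₁ u₂)⁻¹) : SimpleGraph (β × α) where
  Adj p q := (G.Adj p.2 q.2 ∧ q.1 = φ p.2 q.2 p.1) ∨ (p.2 = q.2 ∧ F.Adj p.1 q.1)
  symm := by
    refine ⟨?_⟩
    rintro ⟨v₁, u₁⟩ ⟨v₂, u₂⟩ hadj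
    dsimp only at hadj ⊢
    rcases hadj with ⟨h, rfl⟩ | ⟨rfl, h⟩
    · left
      refine ⟨h.symm, ?_⟩
      rw [hsym _ _ h]
      simp
    · right
      exact ⟨rfl, h.symm⟩
  loopless := by
    refine ⟨?_⟩
    rintro ⟨v, u⟩ hadj
    dsimp only at hadj
    rcases hadj with ⟨h, _⟩ | ⟨_, h⟩
    · exact G.loopless.irrefl u h
    · exact F.loopless.irrefl v h

def dsum [Fintype α] (B : β → Matrix α α ℂ) : Matrix (β × α) (β × α) ℂ :=
  Matrix.of fun p q => if p.1 = q.1 then B p.1 p.2 q.2 else 0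

def bigE {ℓ : ℕ} {f m : Fin ℓ → ℕ} (e : β ≃ Σ i : Fin ℓ, Fin (m i) × Fin (f i)) (α : Type*) :
    β × α ≃ Σ i : Fin ℓ, Fin (m i) × (Fin (f i) × α) :=
  (e.prodCongr (Equiv.refl α)).trans
    ((Equiv.sigmaProdDistrib _ _).trans (Equiv.sigmaCongrRight fun _ => Equiv.prodAssoc _ _ _))

/-!
The bundle's adjacency matrix splits as `∑ γ, P(γ) ⊗ A(G_{φ,γ}) + A(F) ⊗ I` and, since the
neighbours of `(v, u)` are the `deg_G u` lifts of edges of `G` together with the `deg_F v` edges of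
the fibre, its degree matrix is `I ⊗ D(G) + D(F) ⊗ I`. Conjugation by `M ⊗ I` only touches the first
Kronecker factor: it turns `P(γ)` into `⊕ᵢ I_{mᵢ} ⊗ ρᵢ(γ)` and fixes `I`, `A(F)` and `D(F)`.
Regrouping the `γ`-sum block by block along `bigE` gives the right-hand side.
-/

lemma Matrix.sub_kronecker {R l m n p : Type*} [NonUnitalNonAssocRing R] (A B : Matrix l m R)
    (C : Matrix n p R) :
    (A - B) ⊗ₖ C = A ⊗ₖ C - B ⊗ₖ C := by
  ext
  simp [sub_mul]

lemma Matrix.inv_kronecker_one_mul_kronecker_mul {R : Type*} [CommRing R] [Fintype α] [Fintype β]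
    [DecidableEq α] [DecidableEq β] (M A : Matrix β β R) (B : Matrix α α R) :
    (M ⊗ₖ (1 : Matrix α α R))⁻¹ * (A ⊗ₖ B) * (M ⊗ₖ 1) = (M⁻¹ * A * M) ⊗ₖ B := by
  rw [inv_kronecker, inv_one, ← mul_kronecker_mul, ← mul_kronecker_mul, one_mul, mul_one]

section Bundle

variable (G : SimpleGraph α) (F : SimpleGraph β) (φ : α → α → Equiv.Perm β)
  (hsym : ∀ u₁ u₂, G.Adj u₁ u₂ → φ u₂ u₁ = (φ u₁ u₂)⁻¹)

lemma sum_permM_kronecker_voltM_apply [Fintype α] [Fintype β] (Γ : Subgroup (Equiv.Perm β))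
    (hφΓ : ∀ u₁ u₂, G.Adj u₁ u₂ → φ u₁ u₂ ∈ Γ) (v₁ v₂ : β) (u₁ u₂ : α) :
    (∑ γ : Γ, permM (γ : Equiv.Perm β) ⊗ₖ voltM G φ (γ : Equiv.Perm β)) (v₁, u₁) (v₂, u₂)
      = if G.Adj u₁ u₂ ∧ φ u₁ u₂ v₁ = v₂ then 1 else 0 := by
  simp only [Matrix.sum_apply, kronecker_apply, permM, voltM, of_apply, ite_zero_mul_ite_zero,
    mul_one]
  by_cases hG : G.Adj u₁ u₂
  · rw [Finset.sum_eq_single ⟨φ u₁ u₂, hφΓ _ _ hG⟩]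
    · simp [hG]
    · rintro γ - hγ
      rw [if_neg]
      rintro ⟨-, -, hφ⟩
      exact hγ (Subtype.ext hφ.symm)
    · simp
  · simp [hG]

lemma adjM_bundle [Fintype α] [Fintype β] (Γ : Subgroup (Equiv.Perm β))
    (hφΓ : ∀ u₁ u₂, G.Adj u₁ u₂ → φ u₁ u₂ ∈ Γ) :
    adjM (bundle G F φ hsym)
      = (∑ γ : Γ, permM (γ : Equiv.Perm β) ⊗ₖ voltM G φ (γ : Equiv.Perm β))
        + adjM F ⊗ₖ (1 : Matrix α α ℂ) := by
  ext ⟨v₁, u₁⟩ ⟨v₂, u₂⟩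
  simp only [adjM, bundle, of_apply, Matrix.add_apply, sum_permM_kronecker_voltM_apply G φ Γ hφΓ,
    kronecker_apply, one_apply]
  by_cases hG : G.Adj u₁ u₂
  · simp [hG, G.ne_of_adj hG, eq_comm]
  · by_cases hu : u₁ = u₂ <;> simp [hG, hu]

lemma neighborSet_bundle (v : β) (u : α) :
    (bundle G F φ hsym).neighborSet (v, u)
      = (fun u' => (φ u u' v, u')) '' G.neighborSet u ∪ (fun v' => (v', u)) '' F.neighborSet v := by
  ext ⟨v', u'⟩
  simp only [SimpleGraph.mem_neighborSet, bundle, Set.mem_union, Set.mem_image, Prod.mk.injEq]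
  constructor
  · rintro (⟨hG, rfl⟩ | ⟨rfl, hF⟩)
    exacts [Or.inl ⟨u', hG, rfl, rfl⟩, Or.inr ⟨v', hF, rfl, rfl⟩]
  · rintro (⟨u', hG, rfl, rfl⟩ | ⟨v', hF, rfl, rfl⟩)
    exacts [Or.inl ⟨hG, rfl⟩, Or.inr ⟨rfl, hF⟩]

lemma ncard_neighborSet_bundle [Finite α] [Finite β] (v : β) (u : α) :
    ((bundle G F φ hsym).neighborSet (v, u)).ncard
      = (G.neighborSet u).ncard + (F.neighborSet v).ncard := by
  have hdisj : Disjoint ((fun u' => (φ u u' v, u')) '' G.neighborSet u)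
      ((fun v' => (v', u)) '' F.neighborSet v) := by
    rw [Set.disjoint_left]
    rintro _ ⟨u', hG, rfl⟩ ⟨v', -, hv'⟩
    exact G.ne_of_adj hG (congrArg Prod.snd hv')
  rw [neighborSet_bundle, Set.ncard_union_eq hdisj (Set.toFinite _) (Set.toFinite _),
    Set.ncard_image_of_injective _ fun _ _ h => congrArg Prod.snd h,
    Set.ncard_image_of_injective _ fun _ _ h => congrArg Prod.fst h]

lemma degM_bundle [Fintype α] [Fintype β] :
    degM (bundle G F φ hsym)
      = (1 : Matrix β β ℂ) ⊗ₖ degM G + degM F ⊗ₖ (1 : Matrix α α ℂ) := by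
  ext ⟨v₁, u₁⟩ ⟨v₂, u₂⟩
  simp only [degM, Matrix.add_apply, kronecker_apply, one_apply, diagonal_apply, Prod.mk.injEq]
  by_cases hv : v₁ = v₂ <;> by_cases hu : u₁ = u₂ <;>
    simp [hv, hu, ncard_neighborSet_bundle]

end Bundle

section BlockKronecker

variable {R : Type*} [Ring R] {ℓ : ℕ} {f m : Fin ℓ → ℕ}
  (e : β ≃ Σ i : Fin ℓ, Fin (m i) × Fin (f i)) (α : Type*)

lemma bigE_apply_symm (i : Fin ℓ) (a : Fin (m i)) (b : Fin (f i)) (u : α) :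
    bigE e α (e.symm ⟨i, a, b⟩, u) = ⟨i, a, b, u⟩ := by
  simp [bigE, Equiv.sigmaProdDistrib]

lemma reindex_bigE_blockDiagonal'_sum_kronecker_sub {ι : Type*} (t : Finset ι)
    (A : ∀ i, ι → Matrix (Fin (f i)) (Fin (f i)) R) (V : ι → Matrix α α R)
    (D : Matrix α α R) (μ : R) :
    reindex (bigE e α).symm (bigE e α).symm (blockDiagonal' fun i =>
        (1 : Matrix (Fin (m i)) (Fin (m i)) R) ⊗ₖ
          ((∑ γ ∈ t, A i γ ⊗ₖ V γ) - μ • ((1 : Matrix (Fin (f i)) (Fin (f i)) R) ⊗ₖ D)))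
      = ∑ γ ∈ t, reindex e.symm e.symm (blockDiagonal' fun i =>
            (1 : Matrix (Fin (m i)) (Fin (m i)) R) ⊗ₖ A i γ) ⊗ₖ V γ
        - μ • ((1 : Matrix β β R) ⊗ₖ D) := by
  ext ⟨v, u⟩ ⟨w, u'⟩
  obtain ⟨⟨i, a, b⟩, rfl⟩ := e.symm.surjective v
  obtain ⟨⟨j, c, d⟩, rfl⟩ := e.symm.surjective w
  rcases eq_or_ne i j with rfl | hij
  · simp [bigE_apply_symm, Matrix.sum_apply, one_apply, Finset.mul_sum, mul_sub, ite_and]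
    split_ifs <;> rfl
  · simp [bigE_apply_symm, Matrix.sum_apply, blockDiagonal'_apply_ne _ _ _ hij, one_apply, hij]

end BlockKronecker

theorem bundle_matrix_similarity_general_general
    {α β : Type*} [Fintype α] [Fintype β]
    (G : SimpleGraph α) (F : SimpleGraph β) (φ : α → α → Equiv.Perm β)
    (hsym : ∀ u₁ u₂, G.Adj u₁ u₂ → φ u₂ u₁ = (φ u₁ u₂)⁻¹)
    (Γ : Subgroup (Equiv.Perm β))
    (hφΓ : ∀ u₁ u₂, G.Adj u₁ u₂ → φ u₁ u₂ ∈ Γ)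
    (ℓ : ℕ) (f m : Fin ℓ → ℕ) (ρ : ∀ i : Fin ℓ, Γ →* GL (Fin (f i)) ℂ)
    (e : β ≃ Σ i : Fin ℓ, Fin (m i) × Fin (f i))
    (M : Matrix β β ℂ) (hM : IsUnit M.det)
    (hP : ∀ γ : Γ, Matrix.reindex e e (M⁻¹ * permM (γ : Equiv.Perm β) * M)
        = Matrix.blockDiagonal' fun i =>
            (1 : Matrix (Fin (m i)) (Fin (m i)) ℂ)
              ⊗ₖ (ρ i γ : Matrix (Fin (f i)) (Fin (f i)) ℂ))
    (hMA : M⁻¹ * adjM F * M = adjM F) (hMD : M⁻¹ * degM F * M = degM F)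
    (μ : ℂ) :
    (M ⊗ₖ (1 : Matrix α α ℂ))⁻¹
        * (adjM (bundle G F φ hsym) - μ • degM (bundle G F φ hsym))
        * (M ⊗ₖ (1 : Matrix α α ℂ))
      = Matrix.reindex (bigE e α).symm (bigE e α).symm
          (Matrix.blockDiagonal' fun i =>
            (1 : Matrix (Fin (m i)) (Fin (m i)) ℂ) ⊗ₖ
              ((∑ γ : Γ, (ρ i γ : Matrix (Fin (f i)) (Fin (f i)) ℂ)
                  ⊗ₖ voltM G φ (γ : Equiv.Perm β))
                - μ • ((1 : Matrix (Fin (f i)) (Fin (f i)) ℂ) ⊗ₖ degM G)))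
        + (adjM F - μ • degM F) ⊗ₖ (1 : Matrix α α ℂ) := by
  have hconjP : ∀ γ : Γ, M⁻¹ * permM (γ : Equiv.Perm β) * M
      = reindex e.symm e.symm (blockDiagonal' fun i =>
          (1 : Matrix (Fin (m i)) (Fin (m i)) ℂ) ⊗ₖ (ρ i γ : Matrix (Fin (f i)) (Fin (f i)) ℂ)) :=
    fun γ => by rw [← hP γ, ← reindex_symm, Equiv.symm_apply_apply]
  rw [reindex_bigE_blockDiagonal'_sum_kronecker_sub, adjM_bundle G F φ hsym Γ hφΓ, degM_bundle]
  simp only [Matrix.mul_add, Matrix.add_mul, Matrix.mul_sub, Matrix.sub_mul, Matrix.mul_smul,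
    Matrix.smul_mul, Finset.mul_sum, Finset.sum_mul, smul_add, sub_kronecker, smul_kronecker,
    inv_kronecker_one_mul_kronecker_mul, hconjP, hMA, hMD, Matrix.mul_one, nonsing_inv_mul M hM]
  abel

theorem bundle_matrix_similarity_general
    {α β : Type*} [Fintype α] [Fintype β]
    (G : SimpleGraph α) (F : SimpleGraph β) (φ : α → α → Equiv.Perm β)
    (hsym : ∀ u₁ u₂, G.Adj u₁ u₂ → φ u₂ u₁ = (φ u₁ u₂)⁻¹)
    (Γ : Subgroup (Equiv.Perm β)) (hΓAut : Γ ≤ autPerm F)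
    (hφΓ : ∀ u₁ u₂, G.Adj u₁ u₂ → φ u₁ u₂ ∈ Γ)
    (ℓ : ℕ) (f m : Fin ℓ → ℕ) (ρ : ∀ i : Fin ℓ, Γ →* GL (Fin (f i)) ℂ)
    (hsum : ∑ i, m i * f i = Fintype.card β)
    (e : β ≃ Σ i : Fin ℓ, Fin (m i) × Fin (f i))
    (M : Matrix β β ℂ) (hM : IsUnit M.det)
    (hP : ∀ γ : Γ, Matrix.reindex e e (M⁻¹ * permM (γ : Equiv.Perm β) * M)
        = Matrix.blockDiagonal' fun i =>
            (1 : Matrix (Fin (m i)) (Fin (m i)) ℂ)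
              ⊗ₖ (ρ i γ : Matrix (Fin (f i)) (Fin (f i)) ℂ))
    (hMA : M⁻¹ * adjM F * M = adjM F) (hMD : M⁻¹ * degM F * M = degM F)
    (μ : ℂ) :
    (M ⊗ₖ (1 : Matrix α α ℂ))⁻¹
        * (adjM (bundle G F φ hsym) - μ • degM (bundle G F φ hsym))
        * (M ⊗ₖ (1 : Matrix α α ℂ))
      = Matrix.reindex (bigE e α).symm (bigE e α).symm
          (Matrix.blockDiagonal' fun i =>
            (1 : Matrix (Fin (m i)) (Fin (m i)) ℂ) ⊗ₖ
              ((∑ γ : Γ, (ρ i γ : Matrix (Fin (f i)) (Fin (f i)) ℂ)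
                  ⊗ₖ voltM G φ (γ : Equiv.Perm β))
                - μ • ((1 : Matrix (Fin (f i)) (Fin (f i)) ℂ) ⊗ₖ degM G)))
        + (adjM F - μ • degM F) ⊗ₖ (1 : Matrix α α ℂ) :=
  bundle_matrix_similarity_general_general G F φ hsym Γ hφΓ ℓ f m ρ e M hM hP hMA hMD μ

end
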